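/- arXiv:1802.09489 — 4 statements merged into one kernel-verified Lean document; each statement's English description precedes it below -/
import Mathlib

section
/- Fix T ∈ ℝ, T ≠ 0, and complex α, β with Re(α) > 0, Re(β) > 0. Let η(y,T,α,β) = ∫_{u>|T|} e^{-uy}(u+T)^{α-1}(u-T)^{β-1} du. Then lim_{y→∞} e^{Ty} y^{β} η(y,T,α,β) = 0 if T < 0, and lim_{y→∞} e^{Ty} y^{β} η(y,T,α,β) = Γ(β)(2T)^{α-1} if T > 0. -/
/-! After the shift `u = |T| + s`, `η(y,T,α,β)` is `e^{-|T|y}` times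
`∫_0^∞ e^{-ys} s^{b-1} (s+2|T|)^{a-1} ds`, with `(a, b) = (α, β)` if `T > 0` and `(β, α)` if
`T < 0`.
Substituting `s = t/y` and using dominated convergence (Watson's lemma), `y^b` times this integral
tends to `Γ(b) (2|T|)^{a-1}`. For `T > 0` this is the claim; for `T < 0` what remains in front is
`e^{2Ty} y^{β-α} → 0`. -/

open MeasureTheory Filter

/-- Shimura's genus 1 confluent hypergeometric function
`η(y,T,α,β) = ∫_{u>|T|} e^{-uy} (u+T)^{α-1} (u-T)^{β-1} du`. -/
noncomputable def eta1 (y T : ℝ) (α β : ℂ) : ℂ :=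
  ∫ u in Set.Ioi |T|, Complex.exp (-((u * y : ℝ) : ℂ)) *
    ((u + T : ℝ) : ℂ) ^ (α - 1) * ((u - T : ℝ) : ℂ) ^ (β - 1)

open Set Topology

lemma integral_Ioi_comp_add_right {E : Type*} [NormedAddCommGroup E] [NormedSpace ℝ E]
    (g : ℝ → E) (a b : ℝ) :
    ∫ x in Ioi a, g (x + b) = ∫ x in Ioi (a + b), g x := by
  rw [← integral_indicator measurableSet_Ioi, ← integral_indicator measurableSet_Ioi,
    ← integral_add_right_eq_self ((Ioi (a + b)).indicator g) b]
  congr 1 with x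
  simp only [indicator_apply, mem_Ioi, add_lt_add_iff_right]

namespace Real

lemma rpow_le_rpow_add_rpow_of_mem_Icc {u v x : ℝ} (hu : 0 < u) (hx : x ∈ Icc u v) (p : ℝ) :
    x ^ p ≤ u ^ p + v ^ p := by
  have hx0 : 0 < x := hu.trans_le hx.1
  rcases le_total 0 p with hp | hp
  · exact le_add_of_nonneg_of_le (rpow_nonneg hu.le p) (rpow_le_rpow hx0.le hx.2 hp)
  · exact le_add_of_le_of_nonneg (rpow_le_rpow_of_nonpos hu hx.1 hp)
      (rpow_nonneg (hx0.le.trans hx.2) p)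

lemma add_rpow_le_two_rpow_mul_rpow_add_rpow {t c p : ℝ} (ht : 0 ≤ t) (hc : 0 ≤ c)
    (hp : 0 ≤ p) : (t + c) ^ p ≤ 2 ^ p * (t ^ p + c ^ p) := by
  have hmax : max t c ^ p ≤ t ^ p + c ^ p := by
    rcases le_total t c with h | h
    · rw [max_eq_right h]; exact le_add_of_nonneg_left (by positivity)
    · rw [max_eq_left h]; exact le_add_of_nonneg_right (by positivity)
  calc (t + c) ^ p ≤ (2 * max t c) ^ p :=
        rpow_le_rpow (by positivity) (by linarith [le_max_left t c, le_max_right t c]) hp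
    _ = 2 ^ p * max t c ^ p := mul_rpow zero_le_two (le_max_of_le_left ht)
    _ ≤ 2 ^ p * (t ^ p + c ^ p) := by gcongr

lemma integrableOn_exp_neg_mul_rpow {s : ℝ} (hs : -1 < s) :
    IntegrableOn (fun t : ℝ => Real.exp (-t) * t ^ s) (Ioi 0) := by
  simpa using GammaIntegral_convergent (s := s + 1) (by linarith)

lemma integrableOn_exp_neg_mul_rpow_mul_add_rpow {b c : ℝ} (hb : -1 < b) (hc : 0 < c) (a : ℝ) :
    IntegrableOn (fun t : ℝ => Real.exp (-t) * t ^ b * (t + c) ^ a) (Ioi 0) := by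
  have hmeas : AEStronglyMeasurable (fun t : ℝ => Real.exp (-t) * t ^ b * (t + c) ^ a)
      (volume.restrict (Ioi 0)) := by fun_prop
  rcases le_total 0 a with ha | ha
  · refine Integrable.mono' (((integrableOn_exp_neg_mul_rpow (s := b + a) (by linarith)).add
      ((integrableOn_exp_neg_mul_rpow hb).const_mul (c ^ a))).const_mul (2 ^ a)) hmeas ?_
    filter_upwards [ae_restrict_mem measurableSet_Ioi] with t (ht : 0 < t)
    rw [Real.norm_of_nonneg (by positivity)]
    calc Real.exp (-t) * t ^ b * (t + c) ^ a
        ≤ Real.exp (-t) * t ^ b * (2 ^ a * (t ^ a + c ^ a)) :=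
          mul_le_mul_of_nonneg_left (add_rpow_le_two_rpow_mul_rpow_add_rpow ht.le hc.le ha)
            (by positivity)
      _ = 2 ^ a * (Real.exp (-t) * t ^ (b + a) + c ^ a * (Real.exp (-t) * t ^ b)) := by
          rw [rpow_add ht]; ring
  · refine Integrable.mono' ((integrableOn_exp_neg_mul_rpow hb).const_mul (c ^ a)) hmeas ?_
    filter_upwards [ae_restrict_mem measurableSet_Ioi] with t (ht : 0 < t)
    rw [Real.norm_of_nonneg (by positivity)]
    calc Real.exp (-t) * t ^ b * (t + c) ^ a ≤ Real.exp (-t) * t ^ b * c ^ a :=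
          mul_le_mul_of_nonneg_left
            (rpow_le_rpow_of_nonpos hc (le_add_of_nonneg_left ht.le) ha) (by positivity)
      _ = c ^ a * (Real.exp (-t) * t ^ b) := by ring

end Real

/-- `∫_0^∞ e^{-ys} s^{b-1} (s+c)^{a-1} ds`, which is `Γ(b) c^{a+b-1} U(b, a+b, cy)` for
Tricomi's confluent hypergeometric function `U`. -/
noncomputable def tricomiIntegral (c : ℝ) (a b : ℂ) (y : ℝ) : ℂ :=
  ∫ s in Ioi 0,
    Complex.exp (-((s * y : ℝ) : ℂ)) * (s : ℂ) ^ (b - 1) * ((s + c : ℝ) : ℂ) ^ (a - 1)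

lemma cpow_mul_tricomiIntegral (c : ℝ) (a b : ℂ) {y : ℝ} (hy : 0 < y) :
    (y : ℂ) ^ b * tricomiIntegral c a b y =
      ∫ t in Ioi 0,
        (Real.exp (-t) : ℂ) * (t : ℂ) ^ (b - 1) * ((t / y + c : ℝ) : ℂ) ^ (a - 1) := by
  have hy' : (y : ℂ) ≠ 0 := by exact_mod_cast hy.ne'
  have hyb : (y : ℂ) ^ (b - 1) ≠ 0 := Complex.cpow_ne_zero_iff.mpr (Or.inl hy')
  set g : ℝ → ℂ := fun s =>
    Complex.exp (-((s * y : ℝ) : ℂ)) * (s : ℂ) ^ (b - 1) * ((s + c : ℝ) : ℂ) ^ (a - 1)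
  have hscale : ∫ t in Ioi 0, g (t * y⁻¹) = y • tricomiIntegral c a b y := by
    have := integral_comp_mul_right_Ioi g 0 (inv_pos.mpr hy)
    rwa [zero_mul, inv_inv] at this
  calc (y : ℂ) ^ b * tricomiIntegral c a b y
      = (y : ℂ) ^ (b - 1) * ∫ t in Ioi 0, g (t * y⁻¹) := by
        rw [hscale, Complex.real_smul, ← mul_assoc, Complex.cpow_sub _ _ hy', Complex.cpow_one,
          div_mul_cancel₀ _ hy']
    _ = _ := by
        rw [← integral_const_mul]
        refine setIntegral_congr_fun measurableSet_Ioi fun t (ht : 0 < t) => ?_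
        simp only [g, ← div_eq_mul_inv, Complex.ofReal_exp, Complex.ofReal_neg]
        rw [Complex.ofReal_div, Complex.div_cpow_ofReal_nonneg ht.le hy.le]
        field_simp

lemma tendsto_integral_exp_neg_mul_cpow_mul_div_add_cpow {c : ℝ} (hc : 0 < c) (a : ℂ) {b : ℂ}
    (hb : 0 < b.re) :
    Tendsto (fun y : ℝ => ∫ t in Ioi 0,
        (Real.exp (-t) : ℂ) * (t : ℂ) ^ (b - 1) * ((t / y + c : ℝ) : ℂ) ^ (a - 1))
      atTop (𝓝 (Complex.Gamma b * (c : ℂ) ^ (a - 1))) := by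
  rw [Complex.Gamma_eq_integral hb, Complex.GammaIntegral, ← integral_mul_const]
  refine tendsto_integral_filter_of_dominated_convergence
    (fun t => Real.exp (-t) * t ^ (b.re - 1) * (c ^ (a.re - 1) + (t + c) ^ (a.re - 1)))
    (Eventually.of_forall fun y => by fun_prop) ?_ ?_ ?_
  · filter_upwards [eventually_ge_atTop 1] with y hy
    filter_upwards [ae_restrict_mem measurableSet_Ioi] with t (ht : 0 < t)
    have hty : t / y + c ∈ Icc c (t + c) :=
      ⟨le_add_of_nonneg_left (by positivity), by gcongr; exact div_le_self ht.le hy⟩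
    rw [norm_mul, norm_mul, Complex.norm_real, Real.norm_of_nonneg (Real.exp_pos _).le,
      Complex.norm_cpow_eq_rpow_re_of_pos ht,
      Complex.norm_cpow_eq_rpow_re_of_pos (hc.trans_le hty.1)]
    simp only [Complex.sub_re, Complex.one_re]
    exact mul_le_mul_of_nonneg_left (Real.rpow_le_rpow_add_rpow_of_mem_Icc hc hty _)
      (by positivity)
  · simp only [mul_add]
    exact ((Real.GammaIntegral_convergent hb).mul_const _).add
      (Real.integrableOn_exp_neg_mul_rpow_mul_add_rpow (by linarith) hc _)
  · filter_upwards [ae_restrict_mem measurableSet_Ioi] with t (ht : 0 < t)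
    have hlim : Tendsto (fun y : ℝ => t / y + c) atTop (𝓝 c) := by
      simpa using ((tendsto_const_nhds (x := t)).div_atTop tendsto_id).add_const c
    exact tendsto_const_nhds.mul
      ((continuousAt_cpow_const (Complex.ofReal_mem_slitPlane.2 hc)).tendsto.comp
        ((Complex.continuous_ofReal.tendsto c).comp hlim))

lemma tendsto_cpow_mul_tricomiIntegral {c : ℝ} (hc : 0 < c) (a : ℂ) {b : ℂ} (hb : 0 < b.re) :
    Tendsto (fun y : ℝ => (y : ℂ) ^ b * tricomiIntegral c a b y) atTop
      (𝓝 (Complex.Gamma b * (c : ℂ) ^ (a - 1))) :=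
  (tendsto_integral_exp_neg_mul_cpow_mul_div_add_cpow hc a hb).congr' <| by
    filter_upwards [eventually_gt_atTop 0] with y hy using (cpow_mul_tricomiIntegral c a b hy).symm

lemma tendsto_exp_mul_mul_cpow_atTop_nhds_zero {T : ℝ} (hT : T < 0) (s : ℂ) :
    Tendsto (fun y : ℝ => Complex.exp ((T * y : ℝ) : ℂ) * (y : ℂ) ^ s) atTop (𝓝 0) := by
  rw [tendsto_zero_iff_norm_tendsto_zero]
  refine (tendsto_rpow_mul_exp_neg_mul_atTop_nhds_zero s.re (-T) (by linarith)).congr' ?_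
  filter_upwards [eventually_gt_atTop 0] with y hy
  rw [norm_mul, Complex.norm_exp_ofReal, Complex.norm_cpow_eq_rpow_re_of_pos hy, neg_neg,
    mul_comm]

lemma eta1_neg (y T : ℝ) (α β : ℂ) : eta1 y (-T) β α = eta1 y T α β := by
  simp only [eta1, abs_neg, sub_neg_eq_add, ← sub_eq_add_neg, mul_right_comm _ (_ ^ (β - 1))]

lemma eta1_eq_exp_mul_tricomiIntegral (y : ℝ) {T : ℝ} (hT : 0 < T) (α β : ℂ) :
    eta1 y T α β = Complex.exp (-((T * y : ℝ) : ℂ)) * tricomiIntegral (2 * T) α β y := by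
  rw [eta1, abs_of_pos hT, tricomiIntegral, ← integral_const_mul, ← zero_add T,
    ← integral_Ioi_comp_add_right, zero_add]
  refine setIntegral_congr_fun measurableSet_Ioi fun s _ => ?_
  have hexp : -(((s + T) * y : ℝ) : ℂ) = -((T * y : ℝ) : ℂ) + -((s * y : ℝ) : ℂ) := by
    push_cast; ring
  rw [show s + T + T = s + 2 * T by ring, add_sub_cancel_right, hexp, Complex.exp_add]
  ring

theorem eta1_asymptotics_general (T : ℝ) (α β : ℂ)
    (hα : 0 < α.re) (hβ : 0 < β.re) :
    (T < 0 →
      Tendsto (fun y : ℝ => Complex.exp ((T * y : ℝ) : ℂ) * (y : ℂ) ^ β * eta1 y T α β)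
        atTop (nhds 0)) ∧
    (0 < T →
      Tendsto (fun y : ℝ => Complex.exp ((T * y : ℝ) : ℂ) * (y : ℂ) ^ β * eta1 y T α β)
        atTop (nhds (Complex.Gamma β * ((2 * T : ℝ) : ℂ) ^ (α - 1)))) := by
  refine ⟨fun hT => ?_, fun hT => ?_⟩
  · have hlim := (tendsto_exp_mul_mul_cpow_atTop_nhds_zero (by linarith : 2 * T < 0) (β - α)).mul
      (tendsto_cpow_mul_tricomiIntegral (by linarith : 0 < 2 * -T) β hα)
    rw [zero_mul] at hlim
    refine hlim.congr' ?_
    filter_upwards [eventually_gt_atTop 0] with y hy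
    have hy' : (y : ℂ) ≠ 0 := by exact_mod_cast hy.ne'
    have hyα : (y : ℂ) ^ α ≠ 0 := Complex.cpow_ne_zero_iff.mpr (Or.inl hy')
    have hexp : Complex.exp ((2 * T * y : ℝ) : ℂ) =
        Complex.exp ((T * y : ℝ) : ℂ) * Complex.exp (-((-T * y : ℝ) : ℂ)) := by
      rw [← Complex.exp_add]; push_cast; ring_nf
    rw [← eta1_neg, eta1_eq_exp_mul_tricomiIntegral y (neg_pos.2 hT), Complex.cpow_sub _ _ hy',
      hexp]
    field_simp
  · refine (tendsto_cpow_mul_tricomiIntegral (by linarith : 0 < 2 * T) α hβ).congr' ?_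
    filter_upwards with y
    rw [eta1_eq_exp_mul_tricomiIntegral y hT, mul_right_comm, ← mul_assoc, ← Complex.exp_add,
      add_neg_cancel, Complex.exp_zero, one_mul, mul_comm]

/-- asymptotics of `η(y,T,α,β)` as `y → ∞`:
`e^{Ty} y^β η(y,T,α,β) → 0` if `T < 0`, and `→ Γ(β)(2T)^{α-1}` if `T > 0`. -/
theorem eta1_asymptotics (T : ℝ) (hT : T ≠ 0) (α β : ℂ)
    (hα : 0 < α.re) (hβ : 0 < β.re) :
    (T < 0 →
      Tendsto (fun y : ℝ => Complex.exp ((T * y : ℝ) : ℂ) * (y : ℂ) ^ β * eta1 y T α β)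
        atTop (nhds 0)) ∧
    (0 < T →
      Tendsto (fun y : ℝ => Complex.exp ((T * y : ℝ) : ℂ) * (y : ℂ) ^ β * eta1 y T α β)
        atTop (nhds (Complex.Gamma β * ((2 * T : ℝ) : ℂ) ^ (α - 1)))) :=
  eta1_asymptotics_general T α β hα hβ
end

section
/- Let η(g, h, α, β) = ∫_{u ∈ Sym_n(ℝ), u > h, u > -h} e^{-tr(ug)} det(u+h)^{α-ρ_n} det(u-h)^{β-ρ_n} du with ρ_n = (n+1)/2, defined for positive definite g and invertible symmetric h, with Re(α), Re(β) > ρ_n - 1. Then for every S ∈ GL_n(ℝ), η(Sᵀ g S, h, α, β) = |det S|^{2(ρ_n - α - β)} · η(g, S h Sᵀ, α, β). -/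
open MeasureTheory Matrix

/-!
The substitution `u = S x Sᵀ` maps `{x > ±h}` onto `{u > ±S h Sᵀ}`, turns `tr(u g)` into
`tr(x Sᵀ g S)` and `det(u ± S h Sᵀ)` into `det(S)² det(x ± h)`. Its Jacobian on `Sym_n(ℝ)` is
`|det S|^(n+1)`, which is checked on diagonal matrices and transvections, the generators of `GL_n`.
Since `n + 1 = 2ρ_n`, collecting the powers of `|det S|` gives the exponent `2(ρ_n - α - β)`.
-/

/-- Index set for the independent entries of a symmetric `n × n` matrix. -/
abbrev SymIdx (n : ℕ) := {p : Fin n × Fin n // p.1 ≤ p.2}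

/-- The symmetric matrix determined by its upper triangular entries. -/
def toSym {n : ℕ} (x : SymIdx n → ℝ) : Matrix (Fin n) (Fin n) ℝ :=
  Matrix.of fun i j => if h : i ≤ j then x ⟨(i, j), h⟩ else x ⟨(j, i), le_of_not_ge h⟩

/-- Shimura's confluent hypergeometric function of matrix argument,
`η(g,h,α,β) = ∫_{u > ±h} e^{-tr(ug)} det(u+h)^{α-ρ_n} det(u-h)^{β-ρ_n} du`
with `ρ_n = (n+1)/2`. -/
noncomputable def etaN (n : ℕ) (g h : Matrix (Fin n) (Fin n) ℝ) (α β : ℂ) : ℂ :=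
  ∫ x in {x : SymIdx n → ℝ | (toSym x - h).PosDef ∧ (toSym x + h).PosDef},
    Complex.exp (-(((toSym x * g).trace : ℝ) : ℂ)) *
      (((toSym x + h).det : ℝ) : ℂ) ^ (α - ((n : ℂ) + 1) / 2) *
      (((toSym x - h).det : ℝ) : ℂ) ^ (β - ((n : ℂ) + 1) / 2)

section

variable {n : ℕ}

local notation "ρ_" n:max => ((n : ℂ) + 1) / 2

lemma toSym_transpose (x : SymIdx n → ℝ) : (toSym x)ᵀ = toSym x := by
  ext i j
  simp only [transpose_apply, toSym, of_apply]
  rcases lt_trichotomy i j with hij | rfl | hij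
  · rw [dif_neg hij.not_ge, dif_pos hij.le]
  · rfl
  · rw [dif_pos hij.le, dif_neg hij.not_ge]

lemma toSym_add (x y : SymIdx n → ℝ) : toSym (x + y) = toSym x + toSym y := by
  ext i j; simp only [toSym, of_apply, Pi.add_apply, Matrix.add_apply]; split_ifs <;> rfl

lemma toSym_smul (c : ℝ) (x : SymIdx n → ℝ) : toSym (c • x) = c • toSym x := by
  ext i j; simp only [toSym, of_apply, Pi.smul_apply, Matrix.smul_apply]; split_ifs <;> rfl

lemma continuous_toSym : Continuous (toSym (n := n)) :=
  continuous_matrix fun i j => by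
    simp only [toSym, of_apply]
    split_ifs <;> exact continuous_apply _

def symCoords (u : Matrix (Fin n) (Fin n) ℝ) : SymIdx n → ℝ := fun p => u p.1.1 p.1.2

lemma toSym_symCoords {u : Matrix (Fin n) (Fin n) ℝ} (hu : uᵀ = u) : toSym (symCoords u) = u := by
  ext i j
  simp only [toSym, symCoords, of_apply]
  split_ifs
  · rfl
  · exact congr_fun (congr_fun hu i) j

lemma toSym_apply_coe (x : SymIdx n → ℝ) (p : SymIdx n) : toSym x p.1.1 p.1.2 = x p := by
  simp [toSym, p.2]

lemma symCoords_toSym (x : SymIdx n → ℝ) : symCoords (toSym x) = x :=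
  funext (toSym_apply_coe x)

def symConj (S : Matrix (Fin n) (Fin n) ℝ) : (SymIdx n → ℝ) →ₗ[ℝ] (SymIdx n → ℝ) where
  toFun x := symCoords (S * toSym x * Sᵀ)
  map_add' x y := by
    funext p; simp [symCoords, toSym_add, Matrix.mul_add, Matrix.add_mul]
  map_smul' c x := by
    funext p; simp [symCoords, toSym_smul]

lemma symConj_apply (S : Matrix (Fin n) (Fin n) ℝ) (x : SymIdx n → ℝ) :
    symConj S x = symCoords (S * toSym x * Sᵀ) := rfl

lemma toSym_symConj (S : Matrix (Fin n) (Fin n) ℝ) (x : SymIdx n → ℝ) :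
    toSym (symConj S x) = S * toSym x * Sᵀ :=
  toSym_symCoords (u := S * toSym x * Sᵀ) <| by
    rw [transpose_mul, transpose_mul, transpose_transpose, toSym_transpose, Matrix.mul_assoc]

lemma symConj_mul (M N : Matrix (Fin n) (Fin n) ℝ) :
    symConj (M * N) = symConj M ∘ₗ symConj N := by
  refine LinearMap.ext fun x => ?_
  rw [LinearMap.comp_apply, symConj_apply M, toSym_symConj, symConj_apply, transpose_mul]
  noncomm_ring

lemma symConj_one : symConj (1 : Matrix (Fin n) (Fin n) ℝ) = LinearMap.id := by
  refine LinearMap.ext fun x => ?_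
  rw [symConj_apply, LinearMap.id_apply, Matrix.one_mul, transpose_one, Matrix.mul_one,
    symCoords_toSym]

lemma symConj_diagonal (d : Fin n → ℝ) :
    symConj (diagonal d) = toLin' (diagonal fun p : SymIdx n => d p.1.1 * d p.1.2) := by
  refine LinearMap.ext fun x => funext fun p => ?_
  simp only [symConj_apply, symCoords, toLin'_apply, mulVec_diagonal, diagonal_transpose,
    mul_diagonal, diagonal_mul, toSym_apply_coe]
  ring

lemma prod_symIdx {M : Type*} [CommMonoid M] (d : Fin n → M) :
    ∏ p : SymIdx n, d p.1.1 * d p.1.2 = (∏ i, d i) ^ (n + 1) := by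
  classical
  have hsplit : ∀ i j : Fin n, (if i ≤ j then d i * d j else 1) =
      (if i ≤ j then d i else 1) * if i ≤ j then d j else 1 := by
    intro i j; split_ifs <;> simp
  have hdiag : ∀ i j : Fin n, ((if i ≤ j then d i else 1) * if j ≤ i then d i else 1) =
      d i * if i = j then d i else 1 := by
    intro i j
    rcases lt_trichotomy i j with hij | rfl | hij
    · simp [hij.le, hij.not_ge, hij.ne]
    · simp
    · simp [hij.le, hij.not_ge, hij.ne']
  rw [← Finset.prod_subtype (Finset.univ.filter fun q : Fin n × Fin n => q.1 ≤ q.2) (by simp)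
    (fun q => d q.1 * d q.2), Finset.prod_filter, Fintype.prod_prod_type]
  simp_rw [hsplit, Finset.prod_mul_distrib]
  rw [Finset.prod_comm (f := fun i j => if i ≤ j then d j else 1), ← Finset.prod_mul_distrib]
  simp_rw [← Finset.prod_mul_distrib, hdiag, Finset.prod_mul_distrib, Finset.prod_ite_eq,
    Finset.prod_const, Finset.card_univ, Fintype.card_fin, Finset.mem_univ, if_true]
  rw [Finset.prod_pow, pow_succ]

lemma det_symConj_diagonal (d : Fin n → ℝ) :
    LinearMap.det (symConj (diagonal d)) = (diagonal d).det ^ (n + 1) := by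
  rw [symConj_diagonal, LinearMap.det_toLin', det_diagonal, det_diagonal, prod_symIdx]

lemma transvection_mul_diagonal_update {m R : Type*} [Fintype m] [DecidableEq m] [CommRing R]
    {a b : m} (hab : a ≠ b) (c : R) :
    transvection a b c * diagonal (Function.update 1 a c) =
      diagonal (Function.update 1 a c) * transvection a b 1 := by
  ext i j
  rw [mul_diagonal, diagonal_mul]
  simp only [transvection, Matrix.add_apply, single_apply, one_apply, Function.update_apply,
    Pi.one_apply]
  split_ifs <;> grind

lemma det_symConj_transvection {a b : Fin n} (hab : a ≠ b) (c : ℝ) :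
    LinearMap.det (symConj (transvection a b c)) = 1 := by
  -- `δ` is multiplicative and, by conjugation with a diagonal matrix, constant on `c ≠ 0`;
  -- hence `δ 1 ≠ 0` is idempotent.
  set δ : ℝ → ℝ := fun c => LinearMap.det (symConj (transvection a b c))
  have hmul : ∀ c d, δ c * δ d = δ (c + d) := fun c d => by
    simp only [δ, ← LinearMap.det_comp, ← symConj_mul, transvection_mul_transvection_same _ _ hab]
  have hδ0 : δ 0 = 1 := by simp [δ, symConj_one]
  have hδ_const : ∀ c ≠ 0, δ c = δ 1 := by
    intro c hc
    have hD : LinearMap.det (symConj (diagonal (Function.update 1 a c))) ≠ 0 := by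
      rw [det_symConj_diagonal, det_diagonal]
      simp [Function.update_apply, hc]
    have hcomm := congr_arg (fun M => LinearMap.det (symConj M))
      (transvection_mul_diagonal_update hab c)
    simp only [symConj_mul, LinearMap.det_comp] at hcomm
    exact mul_right_cancel₀ hD (hcomm.trans (mul_comm _ _))
  have hδ1 : δ 1 = 1 := by
    have hne : δ 1 ≠ 0 := fun h => by simpa [h, hδ0] using hmul 1 (-1)
    have hsq : δ 1 * δ 1 = δ 1 := by rw [hmul, one_add_one_eq_two, hδ_const 2 two_ne_zero]
    exact (mul_eq_right₀ hne).1 hsq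
  by_cases hc : c = 0
  · rw [hc]; exact hδ0
  · exact (hδ_const c hc).trans hδ1

lemma det_symConj (S : Matrix (Fin n) (Fin n) ℝ) :
    LinearMap.det (symConj S) = S.det ^ (n + 1) := by
  induction S using diagonal_transvection_induction with
  | hdiag D _ => exact det_symConj_diagonal D
  | htransvec t => rw [TransvectionStruct.toMatrix, det_symConj_transvection t.hij,
      det_transvection_of_ne _ _ t.hij, one_pow]
  | hmul A B hA hB => rw [symConj_mul, LinearMap.det_comp, hA, hB, det_mul, mul_pow]

lemma symConj_bijective {S : Matrix (Fin n) (Fin n) ℝ} (hS : IsUnit S.det) :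
    Function.Bijective (symConj S) := by
  have hdet : LinearMap.det (symConj S) ≠ 0 := by
    rw [det_symConj]; exact pow_ne_zero _ hS.ne_zero
  exact (LinearMap.equivOfDetNeZero (symConj S) hdet).bijective

lemma det_mul_mul_transpose {m : Type*} [Fintype m] [DecidableEq m] (S M : Matrix m m ℝ) :
    (S * M * Sᵀ).det = S.det ^ 2 * M.det := by
  rw [det_mul, det_mul, det_transpose]; ring

lemma posDef_mul_mul_transpose_iff {m : Type*} [Fintype m] [DecidableEq m] {S M : Matrix m m ℝ}
    (hS : IsUnit S.det) : (S * M * Sᵀ).PosDef ↔ M.PosDef := by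
  rw [← conjTranspose_eq_transpose_of_trivial, ← star_eq_conjTranspose]
  exact Matrix.IsUnit.posDef_star_right_conjugate_iff ((isUnit_iff_isUnit_det S).2 hS)

lemma isClosed_setOf_posSemidef {X m : Type*} [TopologicalSpace X] [Fintype m]
    {M : X → Matrix m m ℝ} (hM : Continuous M) : IsClosed {x | (M x).PosSemidef} := by
  simp only [posSemidef_iff_dotProduct_mulVec, Set.ofPred_and, Set.ofPred_forall]
  refine (isClosed_eq hM.matrix_conjTranspose hM).inter (isClosed_iInter fun v => ?_)
  exact isClosed_le continuous_const
    (continuous_const.dotProduct (hM.matrix_mulVec continuous_const))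

lemma measurableSet_setOf_posDef {X m : Type*} [TopologicalSpace X] [MeasurableSpace X]
    [OpensMeasurableSpace X] [Fintype m] [DecidableEq m] {M : X → Matrix m m ℝ}
    (hM : Continuous M) : MeasurableSet {x | (M x).PosDef} := by
  have : {x | (M x).PosDef} = {x | (M x).PosSemidef} ∩ {x | (M x).det ≠ 0} := by
    ext x
    exact ⟨fun hx => ⟨hx.posSemidef, hx.det_pos.ne'⟩,
      fun ⟨hx, hdet⟩ => hx.posDef_iff_det_ne_zero.2 hdet⟩
  rw [this]
  exact (isClosed_setOf_posSemidef hM).measurableSet.inter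
    (hM.matrix_det.measurable (measurableSet_singleton 0).compl)

theorem setIntegral_image_linearMap {E F : Type*} [NormedAddCommGroup E] [NormedSpace ℝ E]
    [FiniteDimensional ℝ E] [MeasurableSpace E] [BorelSpace E] (μ : Measure E)
    [μ.IsAddHaarMeasure] [NormedAddCommGroup F] [NormedSpace ℝ F] {T : E →ₗ[ℝ] E}
    (hT : Function.Injective T) {s : Set E} (hs : MeasurableSet s) (f : E → F) :
    ∫ y in T '' s, f y ∂μ = |LinearMap.det T| • ∫ x in s, f (T x) ∂μ := by
  rw [integral_image_eq_integral_abs_det_fderiv_smul μ hs (f := T)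
    (fun x _ => (LinearMap.toContinuousLinearMap T).hasFDerivAt.hasFDerivWithinAt) hT.injOn,
    integral_smul]
  rfl

def etaDomain (h : Matrix (Fin n) (Fin n) ℝ) : Set (SymIdx n → ℝ) :=
  {x | (toSym x - h).PosDef ∧ (toSym x + h).PosDef}

noncomputable def etaIntegrand (g h : Matrix (Fin n) (Fin n) ℝ) (α β : ℂ) (x : SymIdx n → ℝ) :
    ℂ :=
  Complex.exp (-(((toSym x * g).trace : ℝ) : ℂ)) *
    (((toSym x + h).det : ℝ) : ℂ) ^ (α - ρ_ n) *
    (((toSym x - h).det : ℝ) : ℂ) ^ (β - ρ_ n)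

lemma etaN_eq_setIntegral (g h : Matrix (Fin n) (Fin n) ℝ) (α β : ℂ) :
    etaN n g h α β = ∫ x in etaDomain h, etaIntegrand g h α β x := rfl

lemma measurableSet_etaDomain (h : Matrix (Fin n) (Fin n) ℝ) : MeasurableSet (etaDomain h) :=
  (measurableSet_setOf_posDef (continuous_toSym.sub continuous_const)).inter
    (measurableSet_setOf_posDef (continuous_toSym.add continuous_const))

lemma symConj_image_etaDomain {S : Matrix (Fin n) (Fin n) ℝ} (hS : IsUnit S.det)
    (h : Matrix (Fin n) (Fin n) ℝ) : symConj S '' etaDomain h = etaDomain (S * h * Sᵀ) := by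
  rw [← Set.image_preimage_eq (etaDomain (S * h * Sᵀ)) (symConj_bijective hS).surjective]
  congr 1
  ext x
  simp only [Set.mem_preimage, etaDomain, Set.mem_ofPred_eq, toSym_symConj, ← Matrix.mul_sub,
    ← Matrix.sub_mul, ← Matrix.mul_add, ← Matrix.add_mul, posDef_mul_mul_transpose_iff hS]

lemma etaIntegrand_symConj (g h S : Matrix (Fin n) (Fin n) ℝ) (α β : ℂ) {x : SymIdx n → ℝ}
    (hx : x ∈ etaDomain h) :
    etaIntegrand g (S * h * Sᵀ) α β (symConj S x) =
      ((S.det ^ 2 : ℝ) : ℂ) ^ (α - ρ_ n) * ((S.det ^ 2 : ℝ) : ℂ) ^ (β - ρ_ n) *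
        etaIntegrand (Sᵀ * g * S) h α β x := by
  have htrace : (S * toSym x * Sᵀ * g).trace = (toSym x * (Sᵀ * g * S)).trace := by
    rw [Matrix.mul_assoc, Matrix.mul_assoc, trace_mul_comm]
    simp only [Matrix.mul_assoc]
  simp only [etaIntegrand, toSym_symConj, htrace, ← Matrix.mul_sub, ← Matrix.sub_mul,
    ← Matrix.mul_add, ← Matrix.add_mul, det_mul_mul_transpose, Complex.ofReal_mul,
    Complex.mul_cpow_ofReal_nonneg (sq_nonneg S.det) hx.1.det_pos.le,
    Complex.mul_cpow_ofReal_nonneg (sq_nonneg S.det) hx.2.det_pos.le]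
  ring

lemma ofReal_cpow_mul_pow_mul_sq_cpow_eq_one {a : ℝ} (ha : 0 < a) (n : ℕ) (α β : ℂ) :
    (a : ℂ) ^ (2 * (ρ_ n - α - β)) * ((a ^ (n + 1) : ℝ) : ℂ) *
      (((a ^ 2 : ℝ) : ℂ) ^ (α - ρ_ n) * ((a ^ 2 : ℝ) : ℂ) ^ (β - ρ_ n)) = 1 := by
  have hexp : ∀ (k : ℕ) (z : ℂ), ((a ^ k : ℝ) : ℂ) ^ z = Complex.exp (k * Real.log a * z) := by
    intro k z
    rw [Complex.cpow_def_of_ne_zero (by exact_mod_cast (pow_pos ha k).ne'),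
      ← Complex.ofReal_log (pow_pos ha k).le, Real.log_pow]
    push_cast
    ring_nf
  rw [← Complex.cpow_one ((a ^ (n + 1) : ℝ) : ℂ), show (a : ℂ) = ((a ^ 1 : ℝ) : ℂ) by simp,
    hexp, hexp, hexp, hexp, ← Complex.exp_add, ← Complex.exp_add, ← Complex.exp_add]
  convert Complex.exp_zero using 2
  push_cast
  ring

end

theorem etaN_transform_general (n : ℕ) (g h : Matrix (Fin n) (Fin n) ℝ) (α β : ℂ)
    (S : Matrix (Fin n) (Fin n) ℝ) (hS : IsUnit S.det) :
    etaN n (Sᵀ * g * S) h α β =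
      ((|S.det| : ℝ) : ℂ) ^ (2 * (((n : ℂ) + 1) / 2 - α - β)) *
        etaN n g (S * h * Sᵀ) α β := by
  have hchange : etaN n g (S * h * Sᵀ) α β = ((|S.det| ^ (n + 1) : ℝ) : ℂ) *
      (((S.det ^ 2 : ℝ) : ℂ) ^ (α - ((n : ℂ) + 1) / 2) *
        ((S.det ^ 2 : ℝ) : ℂ) ^ (β - ((n : ℂ) + 1) / 2)) * etaN n (Sᵀ * g * S) h α β := by
    rw [etaN_eq_setIntegral, ← symConj_image_etaDomain hS,
      setIntegral_image_linearMap _ (symConj_bijective hS).injective (measurableSet_etaDomain h),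
      setIntegral_congr_fun (measurableSet_etaDomain h)
        (fun x hx => etaIntegrand_symConj g h S α β hx),
      integral_const_mul, det_symConj, abs_pow, Complex.real_smul, etaN_eq_setIntegral]
    ring
  rw [hchange, ← mul_assoc, ← mul_assoc, ← sq_abs,
    ofReal_cpow_mul_pow_mul_sq_cpow_eq_one (abs_pos.2 hS.ne_zero), one_mul]

/-- transformation law
`η(Sᵀ g S, h, α, β) = |det S|^{2(ρ_n - α - β)} η(g, S h Sᵀ, α, β)` for `S ∈ GL_n(ℝ)`. -/
theorem etaN_transform (n : ℕ) (g h : Matrix (Fin n) (Fin n) ℝ)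
    (hg : g.PosDef) (hh : h.IsSymm) (hhdet : IsUnit h.det) (α β : ℂ)
    (hα : ((n : ℝ) + 1) / 2 - 1 < α.re) (hβ : ((n : ℝ) + 1) / 2 - 1 < β.re)
    (S : Matrix (Fin n) (Fin n) ℝ) (hS : IsUnit S.det) :
    etaN n (Sᵀ * g * S) h α β =
      ((|S.det| : ℝ) : ℂ) ^ (2 * (((n : ℂ) + 1) / 2 - α - β)) *
        etaN n g (S * h * Sᵀ) α β :=
  etaN_transform_general n g h α β S hS
end

section
/- Let p be an odd prime and let L be a unimodular quadratic ℤ_p-lattice of rank l, and let T ∈ Sym_n(ℤ_p) with det T ∈ ℤ_p^× and n ≤ l. Then the local representation density at X = 1 satisfies α_p(1, T, L) = p^{n(n+1)/2 - nl} · N, where N is the number of isometric embeddings of the quadratic 𝔽_p-space (ℤ_p^n/p, T mod p) into (L/pL, Q mod p). -/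
/-!
For `k ≥ 1` the reduction `ℤ/p^{k+1} → ℤ/p^k` is a square-zero thickening whose kernel has `p`
elements. Writing a lift of a solution `x₀` mod `p^k` as `x₀ + e` with `e ≡ 0 mod p^k`, the
equation `(x₀ + e)ᵀ S (x₀ + e) = T` becomes the affine equation `eᵀN + Nᵀe = T - x₀ᵀ S x₀` with
`N = S x₀`. Since `x₀ᵀ S x₀ ≡ T` is invertible, `N` has a left inverse modulo the kernel, so for odd
`p` the map `e ↦ eᵀN + Nᵀe` is onto the symmetric matrices. Hence every solution mod `p^k` has
exactly `p^{nl - n(n+1)/2}` lifts, and the density sequence is constant from `k = 1` on. At `k = 1`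
it counts the solutions mod `p`, which are all injective because `T mod p` is nondegenerate.
-/

open MeasureTheory Filter Matrix

/-- The sequence whose limit is the local representation density `α_p(1, T, L)`:
`α_p(1,T,L) = lim_k p^{k(n(n+1)/2 - nl)} · #{x ∈ (L/p^k L)^n : Q(x) ≡ T mod p^k}`,
where the quadratic lattice `L` (of rank `card ι`) is described by its Gram matrix `S`
(so that `Q(x) = xᵀ S x`). -/
noncomputable def localDensitySeq (p : ℕ) [Fact p.Prime] {ι : Type} [Fintype ι]
    {n : ℕ} (S : Matrix ι ι ℤ_[p]) (T : Matrix (Fin n) (Fin n) ℤ_[p]) (k : ℕ) : ℝ :=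
  (p : ℝ) ^ ((k : ℤ) * ((n * (n + 1) / 2 : ℤ) - (n : ℤ) * Fintype.card ι)) *
    Nat.card {x : Matrix ι (Fin n) (ZMod (p ^ k)) //
      xᵀ * S.map (PadicInt.toZModPow k) * x = T.map (PadicInt.toZModPow k)}

namespace Matrix

theorem injective_mulVec_of_transpose_mul_mul_eq {K : Type*} [CommRing K] {l n : Type*}
    [Fintype l] [Fintype n] [DecidableEq n] {A : Matrix l l K} {B : Matrix n n K}
    (hB : IsUnit B.det) {x : Matrix l n K} (hx : xᵀ * A * x = B) : Function.Injective x.mulVec := by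
  have hcomp : (xᵀ * A).mulVec ∘ x.mulVec = B.mulVec := by
    ext v
    simp [Matrix.mulVec_mulVec, hx]
  exact Function.Injective.of_comp (f := (xᵀ * A).mulVec)
    (hcomp ▸ mulVec_injective_of_isUnit ((isUnit_iff_isUnit_det B).mpr hB))

theorem isUnit_det_map {K K' : Type*} [CommRing K] [CommRing K'] {n : Type*} [Fintype n]
    [DecidableEq n] (f : K →+* K') {T : Matrix n n K} (hT : IsUnit T.det) :
    IsUnit (T.map f).det :=
  f.map_det T ▸ hT.map f

section Symmetric

variable {α n : Type*}

def isSymmEquivSym2 : {A : Matrix n n α // A.IsSymm} ≃ (Sym2 n → α) :=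
  (Equiv.subtypeEquiv Matrix.of.symm fun A => by
    rw [IsSymm.ext_iff, forall_comm]; rfl).trans Sym2.lift

theorem card_isSymm [Fintype n] :
    Nat.card {A : Matrix n n α // A.IsSymm} =
      Nat.card α ^ (Fintype.card n * (Fintype.card n + 1) / 2) := by
  rw [Nat.card_congr isSymmEquivSym2, Nat.card_fun, Nat.card_eq_fintype_card (α := Sym2 n),
    Sym2.card, Nat.choose_two_right, Nat.add_sub_cancel, Nat.mul_comm]

end Symmetric

section Lifting

variable {R R' : Type*} [CommRing R] [CommRing R'] {I : Ideal R} {l m n : Type*}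

theorem card_map_fiber_eq (π : R →+* R') (P : Matrix l n R → Prop) (x₀ : Matrix l n R) :
    Nat.card {x // P x ∧ x.map π = x₀.map π} =
      Nat.card {e : Matrix l n (RingHom.ker π) // P (x₀ + e.map Subtype.val)} := by
  refine Nat.card_congr
    { toFun := fun x => ⟨of fun i j => ⟨(x.1 - x₀) i j, ?_⟩, ?_⟩
      invFun := fun e => ⟨x₀ + e.1.map Subtype.val, e.2, ?_⟩
      left_inv := fun x => by ext; simp
      right_inv := fun e => by ext; simp }
  · rw [RingHom.mem_ker, sub_apply, map_sub, sub_eq_zero]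
    exact congr_fun (congr_fun x.2.2 i) j
  · convert x.2.1
    ext
    simp
  · ext i j
    simp [RingHom.mem_ker.mp (e.1 i j).2]

theorem mul_apply_mem_of_left [Fintype m] {A : Matrix l m R} (hA : ∀ i j, A i j ∈ I)
    (B : Matrix m n R) (i : l) (j : n) : (A * B) i j ∈ I :=
  I.sum_mem fun k _ => I.mul_mem_right _ (hA i k)

theorem mul_apply_mem_of_right [Fintype m] (A : Matrix l m R) {B : Matrix m n R}
    (hB : ∀ i j, B i j ∈ I) (i : l) (j : n) : (A * B) i j ∈ I :=
  I.sum_mem fun k _ => I.mul_mem_left _ (hB k j)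

theorem mul_eq_zero_of_sq_eq_bot [Fintype m] (hI : I ^ 2 = ⊥) {A : Matrix l m R} {B : Matrix m n R}
    (hA : ∀ i j, A i j ∈ I) (hB : ∀ i j, B i j ∈ I) : A * B = 0 := by
  ext i j
  refine Finset.sum_eq_zero fun k _ => ?_
  have hmem := Ideal.mul_mem_mul (hA i k) (hB k j)
  rwa [← sq, hI, Ideal.mem_bot] at hmem

variable [Fintype l]

theorem transpose_mul_mul_add_of_sq_eq_bot (hI : I ^ 2 = ⊥) {S : Matrix l l R} (hS : S.IsSymm)
    (x e : Matrix l n R) (he : ∀ i j, e i j ∈ I) :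
    (x + e)ᵀ * S * (x + e) = xᵀ * S * x + (eᵀ * (S * x) + (S * x)ᵀ * e) := by
  have hquad : eᵀ * S * e = 0 :=
    mul_eq_zero_of_sq_eq_bot hI (mul_apply_mem_of_left (fun i j => he j i) S) he
  have hcross : xᵀ * S * e = (S * x)ᵀ * e := by rw [transpose_mul, hS.eq]
  rw [transpose_add, Matrix.add_mul, Matrix.add_mul, Matrix.mul_add, Matrix.mul_add, hquad,
    hcross, Matrix.mul_assoc eᵀ]
  abel

variable (I) in
def polarHom (N : Matrix l n R) : Matrix l n I →+ Matrix n n I where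
  toFun e := of fun i j => ⟨((e.map Subtype.val)ᵀ * N + Nᵀ * e.map Subtype.val) i j,
    I.add_mem (mul_apply_mem_of_left (fun i j => (e j i).2) N i j)
      (mul_apply_mem_of_right Nᵀ (fun i j => (e i j).2) i j)⟩
  map_zero' := by ext; simp
  map_add' e f := by
    ext i j
    simp only [of_apply, Submodule.coe_add, Matrix.map_add Subtype.val (fun _ _ => rfl) e f,
      transpose_add, Matrix.add_mul, Matrix.mul_add, add_apply]
    abel

theorem map_val_polarHom (N : Matrix l n R) (e : Matrix l n I) :
    (polarHom I N e).map Subtype.val = (e.map Subtype.val)ᵀ * N + Nᵀ * e.map Subtype.val :=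
  rfl

theorem polarHom_eq_iff {N : Matrix l n R} {e : Matrix l n I} {C : Matrix n n I} :
    polarHom I N e = C ↔ (e.map Subtype.val)ᵀ * N + Nᵀ * e.map Subtype.val = C.map Subtype.val := by
  rw [← map_val_polarHom, (map_injective Subtype.val_injective).eq_iff]

theorem isSymm_polarHom (N : Matrix l n R) (e : Matrix l n I) : (polarHom I N e).IsSymm := by
  rw [← isSymm_map_iff Subtype.val_injective, map_val_polarHom]
  convert isSymm_add_transpose_self ((e.map Subtype.val)ᵀ * N) using 2
  rw [transpose_mul, transpose_transpose]

theorem exists_polarHom_eq [Fintype n] [DecidableEq n] (hI : I ^ 2 = ⊥) (h2 : IsUnit (2 : R))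
    {N : Matrix l n R} {P : Matrix n l R} (hPN : ∀ i j, (P * N - 1 : Matrix n n R) i j ∈ I)
    {C : Matrix n n I} (hC : C.IsSymm) : ∃ e, polarHom I N e = C := by
  set c : Matrix n n R := C.map Subtype.val
  have hc : ∀ i j, c i j ∈ I := fun i j => (C i j).2
  have hcs : cᵀ = c := (hC.map _).eq
  have hcPN : c * (P * N) = c := by
    rw [← sub_eq_zero, ← Matrix.mul_one c, Matrix.mul_assoc, Matrix.one_mul, ← Matrix.mul_sub]
    exact mul_eq_zero_of_sq_eq_bot hI hc hPN
  have hPNc : (P * N)ᵀ * c = c := by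
    rw [← sub_eq_zero, ← Matrix.one_mul c, ← Matrix.mul_assoc, Matrix.mul_one, ← Matrix.sub_mul,
      ← transpose_one, ← transpose_sub]
    exact mul_eq_zero_of_sq_eq_bot hI (fun i j => hPN j i) hc
  set u : R := ↑h2.unit⁻¹
  have he : ∀ i j, (u • (Pᵀ * c)) i j ∈ I := fun i j =>
    I.mul_mem_left u (mul_apply_mem_of_right Pᵀ hc i j)
  refine ⟨of fun i j => ⟨_, he i j⟩, polarHom_eq_iff.mpr ?_⟩
  change (u • (Pᵀ * c))ᵀ * N + Nᵀ * (u • (Pᵀ * c)) = c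
  calc (u • (Pᵀ * c))ᵀ * N + Nᵀ * (u • (Pᵀ * c))
      = u • (c * (P * N)) + u • ((P * N)ᵀ * c) := by
        rw [transpose_smul, transpose_mul, transpose_transpose, hcs, Matrix.smul_mul,
          Matrix.mul_smul, transpose_mul, Matrix.mul_assoc, Matrix.mul_assoc]
    _ = (u * 2) • c := by rw [hcPN, hPNc, ← add_smul, mul_two]
    _ = c := by rw [h2.val_inv_mul, one_smul]

theorem card_polarHom_fiber_mul [Fintype n] [DecidableEq n] (hI : I ^ 2 = ⊥) (h2 : IsUnit (2 : R))
    {N : Matrix l n R} {P : Matrix n l R} (hPN : ∀ i j, (P * N - 1 : Matrix n n R) i j ∈ I)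
    {C : Matrix n n I} (hC : C.IsSymm) :
    Nat.card {e // polarHom I N e = C} *
        Nat.card I ^ (Fintype.card n * (Fintype.card n + 1) / 2) =
      Nat.card I ^ (Fintype.card l * Fintype.card n) := by
  obtain ⟨e₀, rfl⟩ := exists_polarHom_eq hI h2 hPN hC
  set f := polarHom I N
  have hrange : Nat.card f.range = Nat.card {C : Matrix n n I // C.IsSymm} :=
    Nat.card_congr <| Equiv.subtypeEquivRight fun C =>
      ⟨fun ⟨e, he⟩ => he ▸ isSymm_polarHom N e, fun hC => exists_polarHom_eq hI h2 hPN hC⟩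
  calc Nat.card {e // f e = f e₀} * _ = Nat.card f.ker * Nat.card f.range := by
        rw [← Nat.card_congr (f.fiberEquivKer e₀), hrange, card_isSymm]; rfl
    _ = Nat.card (Matrix l n I) := by rw [← AddSubgroup.index_ker, AddSubgroup.card_mul_index]
    _ = _ := by rw [Matrix, Nat.card_fun, Nat.card_fun, Nat.card_eq_fintype_card (α := l),
      Nat.card_eq_fintype_card (α := n), ← pow_mul, mul_comm]

variable (π : R →+* R')

theorem card_solutions_fiber_mul [Fintype n] [DecidableEq n] (hπ : Function.Surjective π)
    (hI : RingHom.ker π ^ 2 = ⊥) (h2 : IsUnit (2 : R)) {S : Matrix l l R} (hS : S.IsSymm)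
    {T : Matrix n n R} (hT : T.IsSymm) (hTdet : IsUnit T.det) {y : Matrix l n R'}
    (hy : yᵀ * S.map π * y = T.map π) :
    Nat.card {x : Matrix l n R // xᵀ * S * x = T ∧ x.map π = y} *
        Nat.card (RingHom.ker π) ^ (Fintype.card n * (Fintype.card n + 1) / 2) =
      Nat.card (RingHom.ker π) ^ (Fintype.card l * Fintype.card n) := by
  set I := RingHom.ker π
  obtain ⟨x₀, rfl⟩ : ∃ x₀ : Matrix l n R, x₀.map π = y :=
    ⟨y.map (Function.surjInv hπ), by ext; exact Function.surjInv_eq hπ _⟩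
  set D := T - x₀ᵀ * S * x₀
  have hDmap : D.map π = 0 := by
    rw [Matrix.map_sub _ (map_sub π), Matrix.map_mul, Matrix.map_mul, transpose_map, hy, sub_self]
  have hD : ∀ i j, D i j ∈ I := fun i j => congr_fun (congr_fun hDmap i) j
  have hPN : ∀ i j, (T⁻¹ * x₀ᵀ * (S * x₀) - 1 : Matrix n n R) i j ∈ I := by
    have : T⁻¹ * x₀ᵀ * (S * x₀) - 1 = T⁻¹ * -D := by
      calc T⁻¹ * x₀ᵀ * (S * x₀) - 1 = T⁻¹ * (x₀ᵀ * S * x₀) - T⁻¹ * T := by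
            rw [nonsing_inv_mul _ hTdet]; simp only [Matrix.mul_assoc]
        _ = T⁻¹ * -D := by rw [← Matrix.mul_sub, neg_sub]
    exact this ▸ mul_apply_mem_of_right _ fun i j => I.neg_mem (hD i j)
  set C : Matrix n n I := of fun i j => ⟨D i j, hD i j⟩
  have hC : C.IsSymm := by
    rw [← isSymm_map_iff Subtype.val_injective]
    refine hT.sub ?_
    rw [IsSymm, transpose_mul, transpose_mul, hS.eq, transpose_transpose, Matrix.mul_assoc]
  have hsol : ∀ e : Matrix l n I, (x₀ + e.map Subtype.val)ᵀ * S * (x₀ + e.map Subtype.val) = T ↔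
      polarHom I (S * x₀) e = C := by
    intro e
    rw [polarHom_eq_iff,
      transpose_mul_mul_add_of_sq_eq_bot hI hS x₀ (e.map Subtype.val) fun i j => (e i j).2]
    exact (eq_sub_iff_add_eq').symm
  rw [card_map_fiber_eq, Nat.card_congr (Equiv.subtypeEquivRight hsol)]
  exact card_polarHom_fiber_mul hI h2 hPN hC

theorem card_solutions_mul [Fintype n] [DecidableEq n] [Finite R] (hπ : Function.Surjective π)
    (hI : RingHom.ker π ^ 2 = ⊥) (h2 : IsUnit (2 : R)) {S : Matrix l l R} (hS : S.IsSymm)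
    {T : Matrix n n R} (hT : T.IsSymm) (hTdet : IsUnit T.det) :
    Nat.card {x : Matrix l n R // xᵀ * S * x = T} *
        Nat.card (RingHom.ker π) ^ (Fintype.card n * (Fintype.card n + 1) / 2) =
      Nat.card {y : Matrix l n R' // yᵀ * S.map π * y = T.map π} *
        Nat.card (RingHom.ker π) ^ (Fintype.card l * Fintype.card n) := by
  have : Finite R' := Finite.of_surjective π hπ
  let _ := Fintype.ofFinite {y : Matrix l n R' // yᵀ * S.map π * y = T.map π}
  let ρ : {x : Matrix l n R // xᵀ * S * x = T} →
      {y : Matrix l n R' // yᵀ * S.map π * y = T.map π} := fun x =>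
    ⟨x.1.map π, by rw [← transpose_map, ← Matrix.map_mul, ← Matrix.map_mul, x.2]⟩
  have hfiber : ∀ y, Nat.card {x // ρ x = y} =
      Nat.card {x : Matrix l n R // xᵀ * S * x = T ∧ x.map π = y} := fun y =>
    Nat.card_congr <| (Equiv.subtypeEquivRight fun x => Subtype.ext_iff).trans
      (Equiv.subtypeSubtypeEquivSubtypeInter _ fun x : Matrix l n R => x.map π = y.1)
  rw [← Nat.card_congr (Equiv.sigmaFiberEquiv ρ), Nat.card_sigma, Finset.sum_mul,
    Finset.sum_congr rfl fun y _ => by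
      rw [hfiber, card_solutions_fiber_mul π hπ hI h2 hS hT hTdet y.2],
    Finset.sum_const, Finset.card_univ, smul_eq_mul, ← Nat.card_eq_fintype_card]

end Lifting

end Matrix

namespace ZMod

theorem isUnit_two_of_odd {p : ℕ} (hp : Odd p) (k : ℕ) : IsUnit (2 : ZMod (p ^ k)) := by
  exact_mod_cast (isUnit_iff_coprime 2 (p ^ k)).mpr (Nat.coprime_two_left.mpr (hp.pow))

variable (p : ℕ) [NeZero p]

theorem card_ker_castHom_pow_succ (k : ℕ) :
    Nat.card (RingHom.ker (castHom (pow_dvd_pow p k.le_succ) (ZMod (p ^ k)))) = p := by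
  set f := (castHom (pow_dvd_pow p k.le_succ) (ZMod (p ^ k))).toAddMonoidHom
  have hcard := AddSubgroup.card_mul_index f.ker
  rw [AddSubgroup.index_ker, AddMonoidHom.range_eq_top.mpr (ZMod.ringHom_surjective _),
    AddSubgroup.card_top, Nat.card_zmod, Nat.card_zmod] at hcard
  exact Nat.eq_of_mul_eq_mul_right (pow_pos (NeZero.pos p) k) (hcard.trans (pow_succ' p k))

theorem ker_castHom_pow_succ_sq {k : ℕ} (hk : 1 ≤ k) :
    RingHom.ker (castHom (pow_dvd_pow p k.le_succ) (ZMod (p ^ k))) ^ 2 = ⊥ := by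
  have hdvd : ∀ a ∈ RingHom.ker (castHom (pow_dvd_pow p k.le_succ) (ZMod (p ^ k))),
      p ^ k ∣ a.val := by
    intro a ha
    rwa [RingHom.mem_ker, ← natCast_zmod_val a, map_natCast, natCast_eq_zero_iff] at ha
  rw [sq, ← le_bot_iff]
  refine Ideal.mul_le.mpr fun a ha b hb => ?_
  rw [Ideal.mem_bot, ← natCast_zmod_val a, ← natCast_zmod_val b, ← Nat.cast_mul,
    natCast_eq_zero_iff]
  calc p ^ (k + 1) ∣ p ^ k * p ^ k := (pow_dvd_pow p (by omega)).trans (pow_add p k k).dvd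
    _ ∣ a.val * b.val := mul_dvd_mul (hdvd a ha) (hdvd b hb)

end ZMod

theorem IsLocalRing.ringHom_zmod_eq {R : Type*} [CommRing R] [IsLocalRing R] {p : ℕ}
    [Fact p.Prime] (f g : R →+* ZMod p) : f = g :=
  ZMod.ringHom_eq_of_ker_eq f g <| by
    rw [eq_maximalIdeal (RingHom.ker_isMaximal_of_surjective f (ZMod.ringHom_surjective f)),
      eq_maximalIdeal (RingHom.ker_isMaximal_of_surjective g (ZMod.ringHom_surjective g))]

namespace PadicInt

variable {p : ℕ} [Fact p.Prime] {ι : Type} [Fintype ι] {n : ℕ}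

variable (p) in
noncomputable def representationCount (k : ℕ) (S : Matrix ι ι ℤ_[p])
    (T : Matrix (Fin n) (Fin n) ℤ_[p]) : ℕ :=
  Nat.card {x : Matrix ι (Fin n) (ZMod (p ^ k)) //
    xᵀ * S.map (toZModPow k) * x = T.map (toZModPow k)}

theorem representationCount_succ_mul (hp : p ≠ 2) {S : Matrix ι ι ℤ_[p]} (hS : S.IsSymm)
    {T : Matrix (Fin n) (Fin n) ℤ_[p]} (hT : T.IsSymm) (hTdet : IsUnit T.det) {k : ℕ}
    (hk : 1 ≤ k) :
    representationCount p (k + 1) S T * p ^ (n * (n + 1) / 2) =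
      representationCount p k S T * p ^ (Fintype.card ι * n) := by
  set π := ZMod.castHom (pow_dvd_pow p k.le_succ) (ZMod (p ^ k))
  have hcomp : ∀ {a b : Type} (M : Matrix a b ℤ_[p]),
      (M.map (toZModPow (k + 1))).map π = M.map (toZModPow k) := fun M => by
    rw [Matrix.map_map, ← RingHom.coe_comp, zmod_cast_comp_toZModPow k (k + 1) k.le_succ]
  have h := Matrix.card_solutions_mul π (ZMod.ringHom_surjective π)
    (ZMod.ker_castHom_pow_succ_sq p hk)
    (ZMod.isUnit_two_of_odd (Nat.Prime.odd_of_ne_two Fact.out hp) _)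
    (hS.map (toZModPow (k + 1))) (hT.map (toZModPow (k + 1)))
    (isUnit_det_map (toZModPow (k + 1)) hTdet)
  rwa [hcomp, hcomp, ZMod.card_ker_castHom_pow_succ, Fintype.card_fin] at h

theorem representationCount_one (S : Matrix ι ι ℤ_[p]) (T : Matrix (Fin n) (Fin n) ℤ_[p]) :
    representationCount p 1 S T =
      Nat.card {x : Matrix ι (Fin n) (ZMod p) // xᵀ * S.map toZMod * x = T.map toZMod} := by
  unfold representationCount
  -- `ZMod (p ^ 1)` is not syntactically `ZMod p`; any two ring maps `ℤ_[p] → ZMod p` agree.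
  generalize (toZModPow 1 : ℤ_[p] →+* ZMod (p ^ 1)) = f
  have h : p ^ 1 = p := pow_one p
  generalize p ^ 1 = m at f h ⊢
  subst h
  rw [IsLocalRing.ringHom_zmod_eq f toZMod]

end PadicInt

theorem localDensitySeq_eq (p : ℕ) [Fact p.Prime] {ι : Type} [Fintype ι] {n : ℕ}
    (S : Matrix ι ι ℤ_[p]) (T : Matrix (Fin n) (Fin n) ℤ_[p]) (k : ℕ) :
    localDensitySeq p S T k = (p : ℝ) ^ ((k : ℤ) * ((n * (n + 1) / 2 : ℤ) - n * Fintype.card ι)) *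
      PadicInt.representationCount p k S T :=
  rfl

theorem localDensitySeq_succ {p : ℕ} [Fact p.Prime] (hp : p ≠ 2) {ι : Type} [Fintype ι] {n : ℕ}
    {S : Matrix ι ι ℤ_[p]} (hS : S.IsSymm) {T : Matrix (Fin n) (Fin n) ℤ_[p]} (hT : T.IsSymm)
    (hTdet : IsUnit T.det) {k : ℕ} (hk : 1 ≤ k) :
    localDensitySeq p S T (k + 1) = localDensitySeq p S T k := by
  have hcount := congrArg (Nat.cast : ℕ → ℝ)
    (PadicInt.representationCount_succ_mul hp hS hT hTdet hk)
  push_cast at hcount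
  have hp0 : (p : ℝ) ≠ 0 := by exact_mod_cast (Fact.out : p.Prime).ne_zero
  have hexp : ((k + 1 : ℕ) : ℤ) * ((n * (n + 1) / 2 : ℤ) - n * Fintype.card ι) =
      k * ((n * (n + 1) / 2 : ℤ) - n * Fintype.card ι) + ((n * (n + 1) / 2 : ℕ) : ℤ) -
        ((Fintype.card ι * n : ℕ) : ℤ) := by
    push_cast
    ring
  rw [localDensitySeq_eq, localDensitySeq_eq, hexp, zpow_sub₀ hp0, zpow_add₀ hp0, zpow_natCast,
    zpow_natCast]
  field_simp
  linear_combination hcount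

theorem local_density_unimodular_general (p l n : ℕ) [Fact p.Prime] (hp : p ≠ 2)
    (S : Matrix (Fin l) (Fin l) ℤ_[p]) (hS : S.IsSymm)
    (T : Matrix (Fin n) (Fin n) ℤ_[p]) (hT : T.IsSymm) (hTdet : IsUnit T.det) :
    Tendsto (localDensitySeq p S T) atTop
      (nhds ((p : ℝ) ^ ((n * (n + 1) / 2 : ℤ) - (n : ℤ) * l) *
        Nat.card {x : Matrix (Fin l) (Fin n) (ZMod p) //
          xᵀ * S.map PadicInt.toZMod * x = T.map PadicInt.toZMod ∧
            Function.Injective x.mulVec})) := by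
  have hconst : ∀ k ≥ 1, localDensitySeq p S T k = localDensitySeq p S T 1 :=
    Nat.le_induction rfl fun k hk ih => (localDensitySeq_succ hp hS hT hTdet hk).trans ih
  refine tendsto_atTop_of_eventually_const (i₀ := 1) fun k hk => (hconst k hk).trans ?_
  have hinj : ∀ x : Matrix (Fin l) (Fin n) (ZMod p),
      xᵀ * S.map PadicInt.toZMod * x = T.map PadicInt.toZMod → Function.Injective x.mulVec :=
    fun x => injective_mulVec_of_transpose_mul_mul_eq (isUnit_det_map _ hTdet)
  rw [localDensitySeq_eq, PadicInt.representationCount_one, Nat.cast_one, one_mul,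
    Fintype.card_fin,
    Nat.card_congr (Equiv.subtypeEquivRight fun x => (and_iff_left_of_imp (hinj x)).symm)]

/-- for `p` odd, `L` unimodular of rank `l` and `T ∈ Sym_n(ℤ_p)` unimodular
with `n ≤ l`, the local density satisfies
`α_p(1,T,L) = p^{n(n+1)/2 - nl} · #{isometric embeddings (𝔽_p^n, T) ↪ (L/pL, Q)}`. -/
theorem local_density_unimodular (p l n : ℕ) [Fact p.Prime] (hp : p ≠ 2) (hn : n ≤ l)
    (S : Matrix (Fin l) (Fin l) ℤ_[p]) (hS : S.IsSymm) (hSdet : IsUnit S.det)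
    (T : Matrix (Fin n) (Fin n) ℤ_[p]) (hT : T.IsSymm) (hTdet : IsUnit T.det) :
    Tendsto (localDensitySeq p S T) atTop
      (nhds ((p : ℝ) ^ ((n * (n + 1) / 2 : ℤ) - (n : ℤ) * l) *
        Nat.card {x : Matrix (Fin l) (Fin n) (ZMod p) //
          xᵀ * S.map PadicInt.toZMod * x = T.map PadicInt.toZMod ∧
            Function.Injective x.mulVec})) :=
  local_density_unimodular_general p l n hp S hS T hT hTdet
end

section
/- Let p be an odd prime, T ∈ Sym_n(ℤ_p) unimodular, and L = L₁ ⊕ L₀ an integral quadratic ℤ_p-lattice such that Q(x) ∈ pℤ_p for all x ∈ L₀. Then the local density polynomials satisfy α_p(X, T, L) = α_p(X, T, L₁). -/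
open MeasureTheory Filter Matrix

/-!
Write `x = (x₁, x₀)` according to `L = L' ⊕ L₀`, where `L'` collects all summands other
than `L₀`. Modulo `p^k`, the solutions of `Q(x) = T` are the solutions of
`Q'(x₁) = T - Q₀(x₀)` over all `x₀`. Since `Q₀(x₀) ≡ 0 mod p`, the symmetric matrix
`T - Q₀(x₀)` is congruent to the unimodular `T` (Newton iteration, using that `2` is a unit), so
every `x₀` contributes the same number of solutions as `x₀ = 0`. The resulting factor
`p^{k·n·rank L₀}` is exactly absorbed by the normalisation of the density.
-/

section Hensel

variable {R ν : Type*} [CommRing R]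

theorem Matrix.exists_isSymm_smul_eq (h2 : IsUnit (2 : R)) {a : R} {C : Matrix ν ν R}
    (h : (a • C).IsSymm) : ∃ C' : Matrix ν ν R, C'.IsSymm ∧ a • C' = a • C := by
  obtain ⟨c, hc⟩ := h2.exists_left_inv
  have hsym : a • Cᵀ = a • C := by rw [← transpose_smul]; exact h.eq
  refine ⟨c • (C + Cᵀ), (isSymm_add_transpose_self C).smul c, ?_⟩
  linear_combination (norm := module) c • hsym + hc • (a • C)

variable [Fintype ν] [DecidableEq ν]

theorem Matrix.isUnit_add_smul_of_isNilpotent {π : R} (hπ : IsNilpotent π) {A : Matrix ν ν R}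
    (hA : IsUnit A) (B : Matrix ν ν R) : IsUnit (A + π • B) := by
  obtain ⟨k, hk⟩ := hπ
  have hN : IsNilpotent (π • (A⁻¹ * B)) := ⟨k, by rw [smul_pow, hk, zero_smul]⟩
  have hfac : A + π • B = A * (1 + π • (A⁻¹ * B)) := by
    rw [Matrix.mul_add, Matrix.mul_one, Matrix.mul_smul,
      mul_nonsing_inv_cancel_left _ _ ((isUnit_iff_isUnit_det A).mp hA)]
  rw [hfac]
  exact hA.mul hN.isUnit_one_add

theorem Matrix.exists_conj_eq_add_sq_smul (h2 : IsUnit (2 : R)) {a : R} (ha : IsNilpotent a)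
    {T T' A C : Matrix ν ν R} (hT : T.IsSymm) (hTu : IsUnit T) (hA : IsUnit A) (hC : C.IsSymm)
    (h : Aᵀ * T * A = T' + a • C) :
    ∃ A' C' : Matrix ν ν R, IsUnit A' ∧ C'.IsSymm ∧ A'ᵀ * T * A' = T' + (a * a) • C' := by
  obtain ⟨c, hc⟩ := h2.exists_left_inv
  have hM : IsUnit (Aᵀ * T) := ((isUnit_transpose A).mpr hA).mul hTu
  set B := -(c • ((Aᵀ * T)⁻¹ * C))
  have hAB : Aᵀ * T * B = -(c • C) := by
    rw [Matrix.mul_neg, Matrix.mul_smul,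
      mul_nonsing_inv_cancel_left _ _ ((isUnit_iff_isUnit_det _).mp hM)]
  have hBA : Bᵀ * T * A = -(c • C) := by
    rw [← hC.eq, ← transpose_smul, ← transpose_neg, ← hAB, transpose_mul, transpose_mul,
      transpose_transpose, hT.eq, Matrix.mul_assoc]
  refine ⟨A + a • B, Bᵀ * T * B, isUnit_add_smul_of_isNilpotent ha hA B, ?_, ?_⟩
  · simp only [IsSymm, transpose_mul, transpose_transpose, hT.eq, Matrix.mul_assoc]
  · calc (A + a • B)ᵀ * T * (A + a • B)
          = Aᵀ * T * A + a • (Aᵀ * T * B + Bᵀ * T * A) + (a * a) • (Bᵀ * T * B) := by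
            simp only [transpose_add, transpose_smul, Matrix.add_mul, Matrix.mul_add,
              Matrix.smul_mul, Matrix.mul_smul, smul_add, smul_smul]
            abel
        _ = T' + (a * a) • (Bᵀ * T * B) := by
            rw [h, hAB, hBA]
            linear_combination (norm := module) (-a) • hc • C

theorem Matrix.exists_conj_eq_of_eq_add_smul (h2 : IsUnit (2 : R)) {π : R} (hπ : IsNilpotent π)
    {T T' C : Matrix ν ν R} (hT : T.IsSymm) (hTu : IsUnit T) (hT' : T'.IsSymm)
    (hTT' : T' = T + π • C) : ∃ A : Matrix ν ν R, IsUnit A ∧ Aᵀ * T * A = T' := by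
  have approx : ∀ j : ℕ, ∃ A C : Matrix ν ν R,
      IsUnit A ∧ C.IsSymm ∧ Aᵀ * T * A = T' + π ^ 2 ^ j • C := by
    intro j
    induction j with
    | zero =>
      have hπC : (π • C).IsSymm := by simpa [hTT'] using hT'.sub hT
      obtain ⟨C', hC', hπC'⟩ := exists_isSymm_smul_eq h2 hπC
      refine ⟨1, -C', isUnit_one, hC'.neg, ?_⟩
      rw [hTT', ← hπC', pow_zero, pow_one, smul_neg]
      simp
    | succ j ih =>
      obtain ⟨A, C, hA, hC, h⟩ := ih
      rw [pow_succ, pow_mul, sq]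
      exact exists_conj_eq_add_sq_smul h2 (hπ.pow_of_pos (Nat.two_pow_pos j).ne') hT hTu hA hC h
  obtain ⟨k, hk⟩ := hπ
  obtain ⟨A, C, hA, -, h⟩ := approx k
  refine ⟨A, hA, ?_⟩
  rw [h, pow_eq_zero_of_le (Nat.lt_two_pow_self).le hk, zero_smul, add_zero]

end Hensel

section Representations

variable {R ι κ ν : Type*} [CommRing R] [Fintype ι] [Fintype κ]

def quadraticReps (S : Matrix ι ι R) (T : Matrix ν ν R) : Set (Matrix ι ν R) :=
  {x | xᵀ * S * x = T}

theorem card_quadraticReps_reindex (e : ι ≃ κ) (S : Matrix ι ι R) (T : Matrix ν ν R) :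
    Nat.card (quadraticReps (reindex e e S) T) = Nat.card (quadraticReps S T) := by
  refine (Nat.card_congr (Equiv.subtypeEquiv (reindex e (Equiv.refl ν)) fun x => ?_)).symm
  simp [quadraticReps, transpose_submatrix, submatrix_mul_equiv]

variable [Fintype ν] [DecidableEq ν]

theorem card_quadraticReps_conj (S : Matrix ι ι R) (T : Matrix ν ν R) {A : Matrix ν ν R}
    (hA : IsUnit A) : Nat.card (quadraticReps S (Aᵀ * T * A)) = Nat.card (quadraticReps S T) := by
  have hA' := (isUnit_iff_isUnit_det A).mp hA
  have hQ : ∀ x : Matrix ι ν R, (x * A)ᵀ * S * (x * A) = Aᵀ * (xᵀ * S * x) * A := by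
    intro x; simp only [transpose_mul, Matrix.mul_assoc]
  refine (Nat.card_congr (Equiv.subtypeEquiv
    { toFun := fun x : Matrix ι ν R => x * A, invFun := (· * A⁻¹),
      left_inv := fun x => by simp [Matrix.mul_assoc, mul_nonsing_inv _ hA'],
      right_inv := fun x => by simp [Matrix.mul_assoc, nonsing_inv_mul _ hA'] } fun x => ?_)).symm
  simp only [quadraticReps, Set.mem_ofPred_eq, Equiv.coe_fn_mk, hQ]
  exact ⟨congrArg (Aᵀ * · * A), fun h => ((isUnit_transpose A).mpr hA).mul_left_cancel
    (hA.mul_right_cancel h)⟩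

variable [DecidableEq κ] [Fintype R]

theorem card_quadraticReps_fromBlocks (S : Matrix ι ι R) (S₀ : Matrix κ κ R) (T : Matrix ν ν R) :
    Nat.card (quadraticReps (fromBlocks S 0 0 S₀) T)
      = ∑ x₀ : Matrix κ ν R, Nat.card (quadraticReps S (T - x₀ᵀ * S₀ * x₀)) := by
  have hQ : ∀ (x : Matrix ι ν R) (x₀ : Matrix κ ν R),
      (fromRows x x₀)ᵀ * fromBlocks S 0 0 S₀ * fromRows x x₀ = xᵀ * S * x + x₀ᵀ * S₀ * x₀ := by
    intro x x₀
    simp [transpose_fromRows, fromCols_mul_fromBlocks, fromCols_mul_fromRows]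
  let e : quadraticReps (fromBlocks S 0 0 S₀) T
      ≃ Σ x₀ : Matrix κ ν R, quadraticReps S (T - x₀ᵀ * S₀ * x₀) :=
    { toFun := fun x => ⟨x.1.toRows₂, x.1.toRows₁, by
        have hx : _ = T := x.2
        rw [← fromRows_toRows x.1, hQ] at hx
        exact eq_sub_of_add_eq hx⟩
      invFun := fun y => ⟨fromRows y.2.1 y.1, by
        show _ = T
        rw [hQ, y.2.2, sub_add_cancel]⟩
      left_inv := fun x => Subtype.ext (fromRows_toRows x.1)
      right_inv := fun _ => rfl }
  rw [Nat.card_congr e, Nat.card_sigma]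

theorem card_quadraticReps_fromBlocks_of_dvd (h2 : IsUnit (2 : R)) {π : R} (hπ : IsNilpotent π)
    (S : Matrix ι ι R) {S₀ : Matrix κ κ R} (hS₀ : S₀.IsSymm) (hS₀π : ∀ i j, π ∣ S₀ i j)
    {T : Matrix ν ν R} (hT : T.IsSymm) (hTu : IsUnit T) :
    Nat.card (quadraticReps (fromBlocks S 0 0 S₀) T)
      = Fintype.card R ^ (Fintype.card κ * Fintype.card ν) * Nat.card (quadraticReps S T) := by
  choose S₀' hS₀' using hS₀π
  have hS₀eq : S₀ = π • of S₀' := by ext i j; exact hS₀' i j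
  have hfiber : ∀ x₀ : Matrix κ ν R,
      Nat.card (quadraticReps S (T - x₀ᵀ * S₀ * x₀)) = Nat.card (quadraticReps S T) := by
    intro x₀
    have hsymm : (T - x₀ᵀ * S₀ * x₀).IsSymm :=
      hT.sub (by simp [IsSymm, transpose_mul, hS₀.eq, Matrix.mul_assoc])
    obtain ⟨A, hA, hAT⟩ := exists_conj_eq_of_eq_add_smul h2 hπ hT hTu hsymm
      (C := -(x₀ᵀ * of S₀' * x₀))
      (by rw [hS₀eq, smul_neg, ← sub_eq_add_neg, Matrix.mul_smul, Matrix.smul_mul])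
    rw [← hAT, card_quadraticReps_conj S T hA]
  rw [card_quadraticReps_fromBlocks, Finset.sum_congr rfl fun x₀ _ => hfiber x₀,
    Finset.sum_const, Finset.card_univ, smul_eq_mul, Fintype.card_congr Matrix.of.symm,
    Fintype.card_fun, Fintype.card_fun, ← pow_mul, mul_comm (Fintype.card ν)]

end Representations

def Equiv.sumRightComm (α β γ : Type*) : (α ⊕ β) ⊕ γ ≃ (α ⊕ γ) ⊕ β :=
  (Equiv.sumAssoc α β γ).trans ((Equiv.sumCongr (Equiv.refl α) (Equiv.sumComm β γ)).trans
    (Equiv.sumAssoc α γ β).symm)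

theorem Matrix.reindex_sumRightComm_fromBlocks {α l m n : Type*} [Zero α]
    (A : Matrix l l α) (B : Matrix m m α) (C : Matrix n n α) :
    reindex (Equiv.sumRightComm l n m) (Equiv.sumRightComm l n m)
      (fromBlocks (fromBlocks A 0 0 C) 0 0 B) = fromBlocks (fromBlocks A 0 0 B) 0 0 C := by
  ext ((i | i) | i) ((j | j) | j) <;> simp [Equiv.sumRightComm]

section LocalDensity

variable {p : ℕ} [Fact p.Prime] {ι κ : Type} [Fintype ι] [Fintype κ] {n : ℕ}

theorem localDensitySeq_apply (S : Matrix ι ι ℤ_[p]) (T : Matrix (Fin n) (Fin n) ℤ_[p]) (k : ℕ) :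
    localDensitySeq p S T k =
      (p : ℝ) ^ ((k : ℤ) * ((n * (n + 1) / 2 : ℤ) - (n : ℤ) * Fintype.card ι)) *
        Nat.card (quadraticReps (S.map (PadicInt.toZModPow k)) (T.map (PadicInt.toZModPow k))) :=
  rfl

theorem localDensitySeq_reindex (e : ι ≃ κ) (S : Matrix ι ι ℤ_[p])
    (T : Matrix (Fin n) (Fin n) ℤ_[p]) :
    localDensitySeq p (reindex e e S) T = localDensitySeq p S T := by
  funext k
  rw [localDensitySeq_apply, localDensitySeq_apply, reindex_apply, ← submatrix_map,
    ← reindex_apply, card_quadraticReps_reindex, Fintype.card_congr e]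

theorem localDensitySeq_fromBlocks_of_dvd [DecidableEq κ] (hp : p ≠ 2) (S : Matrix ι ι ℤ_[p])
    {S₀ : Matrix κ κ ℤ_[p]} (hS₀ : S₀.IsSymm) (hS₀p : ∀ i j, (p : ℤ_[p]) ∣ S₀ i j)
    {T : Matrix (Fin n) (Fin n) ℤ_[p]} (hT : T.IsSymm) (hTdet : IsUnit T.det) :
    localDensitySeq p (fromBlocks S 0 0 S₀) T = localDensitySeq p S T := by
  funext k
  have hp0 : (p : ℝ) ≠ 0 := Nat.cast_ne_zero.mpr (Fact.out : p.Prime).ne_zero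
  set φ := PadicInt.toZModPow (p := p) k
  have h2 : IsUnit (2 : ZMod (p ^ k)) := by
    have := (ZMod.isUnit_iff_coprime 2 (p ^ k)).mpr
      ((Nat.coprime_two_left.mpr ((Fact.out : p.Prime).odd_of_ne_two hp)).pow_right k)
    exact_mod_cast this
  have hπ : IsNilpotent (p : ZMod (p ^ k)) := ⟨k, by rw [← Nat.cast_pow, ZMod.natCast_self]⟩
  have hdvd : ∀ i j, (p : ZMod (p ^ k)) ∣ S₀.map φ i j := fun i j => by
    simpa using map_dvd φ (hS₀p i j)
  have hTu : IsUnit (T.map φ) := by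
    rw [isUnit_iff_isUnit_det, ← RingHom.mapMatrix_apply, ← RingHom.map_det]
    exact hTdet.map φ
  rw [localDensitySeq_apply, localDensitySeq_apply, fromBlocks_map, Matrix.map_zero _ φ.map_zero,
    Matrix.map_zero _ φ.map_zero,
    card_quadraticReps_fromBlocks_of_dvd h2 hπ _ (hS₀.map φ) hdvd (hT.map φ) hTu, ZMod.card]
  push_cast
  rw [← pow_mul, ← zpow_natCast, ← mul_assoc, ← zpow_add₀ hp0]
  congr 2
  push_cast [Fintype.card_sum, Fintype.card_fin]
  ring

end LocalDensity

theorem local_density_discard_divisible_part_general (p l₁ l₀ n : ℕ) [Fact p.Prime] (hp : p ≠ 2)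
    (S₁ : Matrix (Fin l₁) (Fin l₁) ℤ_[p])
    (S₀ : Matrix (Fin l₀) (Fin l₀) ℤ_[p]) (hS₀ : S₀.IsSymm)
    (hS₀p : ∀ i j, (p : ℤ_[p]) ∣ S₀ i j)
    (T : Matrix (Fin n) (Fin n) ℤ_[p]) (hT : T.IsSymm) (hTdet : IsUnit T.det)
    (hH : Matrix (Fin 2) (Fin 2) ℤ_[p]) :
    ∀ r : ℕ, ∀ c : ℝ,
      Tendsto (localDensitySeq p
          (Matrix.fromBlocks (Matrix.fromBlocks S₁ 0 0 S₀) 0 0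
            (Matrix.blockDiagonal fun _ : Fin r => hH)) T) atTop (nhds c) ↔
      Tendsto (localDensitySeq p
          (Matrix.fromBlocks S₁ 0 0
            (Matrix.blockDiagonal fun _ : Fin r => hH)) T) atTop (nhds c) := by
  intro r c
  rw [← reindex_sumRightComm_fromBlocks S₁ S₀ (blockDiagonal fun _ : Fin r => hH),
    localDensitySeq_reindex, localDensitySeq_fromBlocks_of_dvd hp _ hS₀ hS₀p hT hTdet]

/-- for `p` odd, `T` unimodular, and `L = L₁ ⊕ L₀` with `Q(L₀) ⊆ pℤ_p`,
the local density polynomials satisfy `α_p(X, T, L) = α_p(X, T, L₁)`, i.e. for every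
`r ≥ 0` the densities of `L ⊕ H^r` and `L₁ ⊕ H^r` agree (`H` the hyperbolic plane). -/
theorem local_density_discard_divisible_part (p l₁ l₀ n : ℕ) [Fact p.Prime] (hp : p ≠ 2)
    (S₁ : Matrix (Fin l₁) (Fin l₁) ℤ_[p]) (hS₁ : S₁.IsSymm)
    (S₀ : Matrix (Fin l₀) (Fin l₀) ℤ_[p]) (hS₀ : S₀.IsSymm)
    (hS₀p : ∀ i j, (p : ℤ_[p]) ∣ S₀ i j)
    (T : Matrix (Fin n) (Fin n) ℤ_[p]) (hT : T.IsSymm) (hTdet : IsUnit T.det)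
    (hH : Matrix (Fin 2) (Fin 2) ℤ_[p]) (hhH : (2 : ℤ_[p]) • hH = !![0, 1; 1, 0]) :
    ∀ r : ℕ, ∀ c : ℝ,
      Tendsto (localDensitySeq p
          (Matrix.fromBlocks (Matrix.fromBlocks S₁ 0 0 S₀) 0 0
            (Matrix.blockDiagonal fun _ : Fin r => hH)) T) atTop (nhds c) ↔
      Tendsto (localDensitySeq p
          (Matrix.fromBlocks S₁ 0 0
            (Matrix.blockDiagonal fun _ : Fin r => hH)) T) atTop (nhds c) :=
  local_density_discard_divisible_part_general p l₁ l₀ n hp S₁ S₀ hS₀ hS₀p T hT hTdet hH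
end
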